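/- Let d ≥ 1 and let F : ℝ^d → ℝ^d be twice continuously differentiable. Assume there are constants L, K₂, m > 0 with ‖DF(y)‖ ≤ L and ‖D²F(y)‖ ≤ K₂ for all y ∈ ℝ^d, and |F(a) − F(b)| ≥ m·|a − b| for all a, b ∈ ℝ^d. Then for every x ∈ ℝ^d and every w ∈ ℝ^d with w ≠ 0, the ratios Y₋ = |F(x) − F(x − w)|/|w| and Y₊ = |F(x) − F(x + w)|/|w| satisfy |Y₋ − Y₊| ≤ (L·K₂/m)·|w|. -/

import Mathlib

/-!
Write `u = F x - F (x - w)` and `v = F x - F (x + w)`. Then `‖u‖² - ‖v‖² = ⟪u + v, u - v⟫`,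
where `u + v` is minus the central second difference of `F` (of size `≤ K₂ ‖w‖²`) and
`‖u - v‖ ≤ 2 L ‖w‖`; dividing by `‖u‖ + ‖v‖ ≥ 2 m ‖w‖` bounds `|‖u‖ - ‖v‖|` by `(L K₂ / m) ‖w‖²`.
-/

open Set

section
variable {E G : Type*} [NormedAddCommGroup E] [NormedSpace ℝ E]
  [NormedAddCommGroup G] [NormedSpace ℝ G]

theorem norm_fderiv_fderiv_eq_norm_iteratedFDeriv_two (f : E → G) (y : E) :
    ‖fderiv ℝ (fderiv ℝ f) y‖ = ‖iteratedFDeriv ℝ 2 f y‖ :=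
  (norm_iteratedFDeriv_one (fderiv ℝ f)).symm.trans norm_iteratedFDeriv_fderiv

theorem norm_sub_le_of_norm_fderiv_le {f : E → G} (hf : Differentiable ℝ f) {C : ℝ}
    (hC : ∀ y, ‖fderiv ℝ f y‖ ≤ C) (a b : E) : ‖f a - f b‖ ≤ C * ‖a - b‖ :=
  convex_univ.norm_image_sub_le_of_norm_fderiv_le (fun y _ => hf y) (fun y _ => hC y)
    (mem_univ b) (mem_univ a)

theorem norm_fderiv_sub_fderiv_le {f : E → G} (hf : ContDiff ℝ 2 f) {K : ℝ}
    (hK : ∀ y, ‖iteratedFDeriv ℝ 2 f y‖ ≤ K) (a b : E) :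
    ‖fderiv ℝ f a - fderiv ℝ f b‖ ≤ K * ‖a - b‖ :=
  norm_sub_le_of_norm_fderiv_le ((hf.fderiv_right le_rfl).differentiable one_ne_zero)
    (fun y => (norm_fderiv_fderiv_eq_norm_iteratedFDeriv_two f y).trans_le (hK y)) a b

theorem norm_central_second_difference_le {f : E → G} (hf : Differentiable ℝ f) {K : ℝ}
    (hK : ∀ a b, ‖fderiv ℝ f a - fderiv ℝ f b‖ ≤ K * ‖a - b‖) (x w : E) :
    ‖f (x + w) + f (x - w) - 2 • f x‖ ≤ K * ‖w‖ ^ 2 := by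
  set g : ℝ → G := fun t => f (x + t • w) + f (x - t • w) - 2 • f x
  set g' : ℝ → G := fun t => fderiv ℝ f (x + t • w) w - fderiv ℝ f (x - t • w) w
  have hg : ∀ t, HasDerivAt g (g' t) t := by
    intro t
    have hplus : HasDerivAt (fun t : ℝ => x + t • w) w t := by
      simpa using ((hasDerivAt_id t).smul_const w).const_add x
    have hminus : HasDerivAt (fun t : ℝ => x - t • w) (-w) t := by
      simpa using ((hasDerivAt_id t).smul_const w).const_sub x
    exact ((((hf _).hasFDerivAt.comp_hasDerivAt t hplus).add
      ((hf _).hasFDerivAt.comp_hasDerivAt t hminus)).sub_const (2 • f x)).congr_deriv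
      (by simp [g', sub_eq_add_neg])
  -- `g 0 = 0` and `‖g' t‖ ≤ 2 K ‖w‖² t`, so `g` stays below the parabola `K ‖w‖² t²`.
  have hg' : ∀ t ∈ Ico (0 : ℝ) 1, ‖g' t‖ ≤ K * ‖w‖ ^ 2 * (2 * t) := by
    intro t ht
    have hspan : (x + t • w) - (x - t • w) = (2 * t) • w := by
      rw [two_mul, add_smul]; abel
    calc ‖g' t‖ ≤ ‖fderiv ℝ f (x + t • w) - fderiv ℝ f (x - t • w)‖ * ‖w‖ :=
          (fderiv ℝ f (x + t • w) - fderiv ℝ f (x - t • w)).le_opNorm w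
      _ ≤ K * ‖(x + t • w) - (x - t • w)‖ * ‖w‖ := by gcongr; exact hK _ _
      _ = K * ‖w‖ ^ 2 * (2 * t) := by
          rw [hspan, norm_smul, Real.norm_of_nonneg (by linarith [ht.1])]; ring
  have hparabola : ∀ t, HasDerivAt (fun t => K * ‖w‖ ^ 2 * t ^ 2) (K * ‖w‖ ^ 2 * (2 * t)) t :=
    fun t => by simpa using (hasDerivAt_pow 2 t).const_mul (K * ‖w‖ ^ 2)
  simpa [g] using image_norm_le_of_norm_deriv_right_le_deriv_boundary
    (fun t _ => (hg t).continuousAt.continuousWithinAt) (fun t _ => (hg t).hasDerivWithinAt)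
    (by simp [g, two_nsmul]) hparabola hg' (right_mem_Icc.mpr zero_le_one)

end

theorem abs_norm_sub_norm_mul_add_le {F : Type*} [NormedAddCommGroup F] [InnerProductSpace ℝ F]
    (u v : F) : |‖u‖ - ‖v‖| * (‖u‖ + ‖v‖) ≤ ‖u + v‖ * ‖u - v‖ := by
  have hinner : inner ℝ (u + v) (u - v) = ‖u‖ ^ 2 - ‖v‖ ^ 2 := by
    rw [inner_add_left, inner_sub_right, inner_sub_right, real_inner_self_eq_norm_sq,
      real_inner_self_eq_norm_sq, real_inner_comm v u]
    ring
  calc |‖u‖ - ‖v‖| * (‖u‖ + ‖v‖) = |‖u‖ ^ 2 - ‖v‖ ^ 2| := by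
        rw [← abs_of_nonneg (by positivity : 0 ≤ ‖u‖ + ‖v‖), ← abs_mul]; ring_nf
    _ = |inner ℝ (u + v) (u - v)| := by rw [hinner]
    _ ≤ ‖u + v‖ * ‖u - v‖ := abs_real_inner_le_norm _ _

theorem variation_ratio_difference_bound (d : ℕ)
    (F : EuclideanSpace ℝ (Fin d) → EuclideanSpace ℝ (Fin d))
    (hF : ContDiff ℝ 2 F)
    (L K₂ m : ℝ) (hm : 0 < m)
    (hDF : ∀ y, ‖fderiv ℝ F y‖ ≤ L)
    (hD2F : ∀ y, ‖iteratedFDeriv ℝ 2 F y‖ ≤ K₂)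
    (hlow : ∀ a b, m * ‖a - b‖ ≤ ‖F a - F b‖)
    (x w : EuclideanSpace ℝ (Fin d)) (hw : w ≠ 0) :
    |‖F x - F (x - w)‖ / ‖w‖ - ‖F x - F (x + w)‖ / ‖w‖| ≤ (L * K₂ / m) * ‖w‖ := by
  set u := F x - F (x - w)
  set v := F x - F (x + w)
  have hw' : 0 < ‖w‖ := norm_pos_iff.mpr hw
  have hu : m * ‖w‖ ≤ ‖u‖ := by simpa using hlow x (x - w)
  have hv : m * ‖w‖ ≤ ‖v‖ := by simpa using hlow x (x + w)
  have hsum : ‖u + v‖ ≤ K₂ * ‖w‖ ^ 2 := by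
    have := norm_central_second_difference_le (hF.differentiable two_ne_zero)
      (norm_fderiv_sub_fderiv_le hF hD2F) x w
    rwa [← norm_neg, show -(F (x + w) + F (x - w) - 2 • F x) = u + v by
      simp only [u, v, two_nsmul]; abel] at this
  have hdiff : ‖u - v‖ ≤ L * (2 * ‖w‖) :=
    calc ‖u - v‖ = ‖F (x + w) - F (x - w)‖ := by congr 1; simp only [u, v]; abel
      _ ≤ L * ‖(x + w) - (x - w)‖ :=
          norm_sub_le_of_norm_fderiv_le (hF.differentiable two_ne_zero) hDF _ _
      _ = L * (2 * ‖w‖) := by rw [add_sub_sub_cancel, ← two_smul ℝ, norm_smul, Real.norm_two]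
  have hkey : |‖u‖ - ‖v‖| * (2 * m * ‖w‖) ≤ (L * K₂ / m) * ‖w‖ ^ 2 * (2 * m * ‖w‖) := by
    calc |‖u‖ - ‖v‖| * (2 * m * ‖w‖) ≤ |‖u‖ - ‖v‖| * (‖u‖ + ‖v‖) := by gcongr; linarith
      _ ≤ ‖u + v‖ * ‖u - v‖ := abs_norm_sub_norm_mul_add_le u v
      _ ≤ K₂ * ‖w‖ ^ 2 * (L * (2 * ‖w‖)) :=
          mul_le_mul hsum hdiff (norm_nonneg _) ((norm_nonneg _).trans hsum)
      _ = (L * K₂ / m) * ‖w‖ ^ 2 * (2 * m * ‖w‖) := by field_simp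
  rw [← sub_div, abs_div, abs_of_pos hw', div_le_iff₀ hw']
  linarith [le_of_mul_le_mul_right hkey (by positivity)]
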